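/- arXiv:2504.07604 — 2 statements merged into one kernel-verified Lean document; each statement's English description precedes it below -/
import Mathlib

section
/- Let d ≥ 1, 1 < p ≤ 2 ≤ q < ∞ with p < q, α > 0, and λ > 0 with λ ≥ d(1/p − 1/q). Let σ : ℝ^d → (0,∞) be measurable and suppose there is c > 0 with σ(ξ) ≥ c|ξ|^λ for all ξ ∈ ℝ^d. Then there is a constant C depending only on d, λ, p, q, c such that M_t ≤ C · t^{−(dα/λ)(1/p − 1/q)} for all t > 0. -/
open MeasureTheory ENNReal

/-- `M_t = sup_{0<ρ<1} ρ · (Vol{ξ : σ(ξ) ≤ t^{-α}(ρ⁻¹ - 1)})^{1/p - 1/q}`. -/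
noncomputable def Mconst {d : ℕ} (p q α t : ℝ) (σ : EuclideanSpace ℝ (Fin d) → ℝ) : ℝ≥0∞ :=
  ⨆ ρ : Set.Ioo (0 : ℝ) 1, ENNReal.ofReal ρ.1 *
    (volume {ξ : EuclideanSpace ℝ (Fin d) | σ ξ ≤ t ^ (-α) * ((ρ.1)⁻¹ - 1)}) ^ (1 / p - 1 / q)

theorem stmt4 (d : ℕ) (hd : 1 ≤ d) (p q lam c : ℝ)
    (hp : 1 < p) (hp2 : p ≤ 2) (h2q : 2 ≤ q) (hpq : p < q)
    (hlam : 0 < lam) (hlamd : (d : ℝ) * (1 / p - 1 / q) ≤ lam) (hc : 0 < c) :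
    ∃ C : ℝ, 0 < C ∧ ∀ α : ℝ, 0 < α →
      ∀ σ : EuclideanSpace ℝ (Fin d) → ℝ, Measurable σ → (∀ ξ, 0 < σ ξ) →
      (∀ ξ, c * ‖ξ‖ ^ lam ≤ σ ξ) →
      ∀ t : ℝ, 0 < t →
        Mconst p q α t σ ≤
          ENNReal.ofReal (C * t ^ (-((d : ℝ) * α / lam) * (1 / p - 1 / q))) := by
  have hq0 : 0 < q := by linarith
  have hp0 : 0 < p := by linarith
  have hβ : 0 < 1 / p - 1 / q := by
    have : 1 / q < 1 / p := one_div_lt_one_div_of_lt hp0 hpq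
    linarith
  set β : ℝ := 1 / p - 1 / q with hβdef
  have hd0 : (0:ℝ) < d := by exact_mod_cast Nat.lt_of_lt_of_le Nat.zero_lt_one hd
  set s : ℝ := (d : ℝ) * β / lam with hsdef
  have hs0 : 0 < s := by positivity
  have hs1 : s ≤ 1 := by
    rw [hsdef, div_le_one hlam]; exact hlamd
  set V : ℝ≥0∞ := volume (Metric.closedBall (0 : EuclideanSpace ℝ (Fin d)) 1) with hVdef
  have hVtop : V ≠ ⊤ := (MeasureTheory.measure_closedBall_lt_top).ne
  have hVpos : 0 < V := by
    exact Metric.measure_closedBall_pos volume _ one_pos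
  set Vr : ℝ := V.toReal with hVrdef
  have hVr : 0 < Vr := ENNReal.toReal_pos hVpos.ne' hVtop
  refine ⟨c ^ (-s) * Vr ^ β, by positivity, ?_⟩
  intro α hα σ hσmeas hσpos hσc t ht
  rw [Mconst]
  apply iSup_le
  rintro ⟨ρ, hρ0, hρ1⟩
  simp only
  have hρinv : 1 < ρ⁻¹ := (one_lt_inv₀ hρ0).2 hρ1
  set R : ℝ := t ^ (-α) * (ρ⁻¹ - 1) with hRdef
  have htα : 0 < t ^ (-α) := Real.rpow_pos_of_pos ht _
  have hRpos : 0 < R := mul_pos htα (by linarith)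
  set r1 : ℝ := (R / c) ^ (1 / lam) with hr1def
  have hr1 : 0 ≤ r1 := Real.rpow_nonneg (by positivity) _
  -- set inclusion
  have hsub : {ξ : EuclideanSpace ℝ (Fin d) | σ ξ ≤ R} ⊆ Metric.closedBall 0 r1 := by
    intro ξ hξ
    simp only [Set.mem_setOf_eq] at hξ
    rw [Metric.mem_closedBall, dist_zero_right]
    have h1 : c * ‖ξ‖ ^ lam ≤ R := le_trans (hσc ξ) hξ
    have h2 : ‖ξ‖ ^ lam ≤ R / c := (le_div_iff₀' hc).mpr h1
    calc ‖ξ‖ = (‖ξ‖ ^ lam) ^ (1 / lam) := by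
          rw [one_div, Real.rpow_rpow_inv (norm_nonneg ξ) hlam.ne']
      _ ≤ (R / c) ^ (1 / lam) :=
          Real.rpow_le_rpow (Real.rpow_nonneg (norm_nonneg ξ) _) h2 (by positivity)
  have hvol : volume {ξ : EuclideanSpace ℝ (Fin d) | σ ξ ≤ R} ≤
      ENNReal.ofReal (r1 ^ d) * V := by
    calc volume {ξ : EuclideanSpace ℝ (Fin d) | σ ξ ≤ R}
        ≤ volume (Metric.closedBall (0 : EuclideanSpace ℝ (Fin d)) r1) :=
          measure_mono hsub
      _ = ENNReal.ofReal (r1 ^ d) * V := by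
          rw [MeasureTheory.Measure.addHaar_closedBall' volume 0 hr1,
            finrank_euclideanSpace_fin]
  -- bound the term
  have key : ENNReal.ofReal ρ * volume {ξ : EuclideanSpace ℝ (Fin d) | σ ξ ≤ R} ^ β ≤
      ENNReal.ofReal (ρ * ((r1 ^ d) ^ β * Vr ^ β)) := by
    have hVof : V = ENNReal.ofReal Vr := (ENNReal.ofReal_toReal hVtop).symm
    calc ENNReal.ofReal ρ * volume {ξ : EuclideanSpace ℝ (Fin d) | σ ξ ≤ R} ^ β
        ≤ ENNReal.ofReal ρ * (ENNReal.ofReal (r1 ^ d) * V) ^ β :=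
          mul_le_mul_right (ENNReal.rpow_le_rpow hvol hβ.le) _
      _ = ENNReal.ofReal ρ * (ENNReal.ofReal ((r1 ^ d) ^ β) * ENNReal.ofReal (Vr ^ β)) := by
          rw [ENNReal.mul_rpow_of_nonneg _ _ hβ.le, hVof,
            ENNReal.ofReal_rpow_of_nonneg (by positivity) hβ.le,
            ENNReal.ofReal_rpow_of_nonneg hVr.le hβ.le]
      _ = ENNReal.ofReal (ρ * ((r1 ^ d) ^ β * Vr ^ β)) := by
          rw [← ENNReal.ofReal_mul (by positivity), ← ENNReal.ofReal_mul hρ0.le]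
  refine key.trans (ENNReal.ofReal_le_ofReal ?_)
  -- real arithmetic
  have hRc : 0 < R / c := by positivity
  have e1 : (r1 ^ d) ^ β = (R / c) ^ s := by
    rw [hr1def, ← Real.rpow_natCast ((R / c) ^ (1 / lam)) d, ← Real.rpow_mul hRc.le,
      ← Real.rpow_mul hRc.le]
    rw [hsdef]
    congr 1
    field_simp
  have e2 : (R / c) ^ s = t ^ (-α * s) * ((ρ⁻¹ - 1) ^ s * c ^ (-s)) := by
    rw [hRdef, div_eq_mul_inv, mul_assoc,
      Real.mul_rpow htα.le (mul_nonneg (by linarith) (inv_nonneg.mpr hc.le)),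
      Real.mul_rpow (by linarith) (inv_nonneg.mpr hc.le), ← Real.rpow_mul ht.le,
      ← Real.rpow_neg_one c, ← Real.rpow_mul hc.le]
    ring_nf
  have e3 : ρ * (ρ⁻¹ - 1) ^ s ≤ 1 := by
    have h1ρ : (0:ℝ) < 1 - ρ := by linarith
    have hinv : ρ⁻¹ - 1 = (1 - ρ) / ρ := by field_simp
    rw [hinv, Real.div_rpow h1ρ.le hρ0.le]
    have key2 : ρ * ((1 - ρ) ^ s / ρ ^ s) = (1 - ρ) ^ s * ρ ^ (1 - s) := by
      rw [Real.rpow_sub hρ0, Real.rpow_one]; ring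
    rw [key2]
    have b1 : (1 - ρ) ^ s ≤ 1 := Real.rpow_le_one h1ρ.le (by linarith) hs0.le
    have b2 : ρ ^ (1 - s) ≤ 1 := Real.rpow_le_one hρ0.le hρ1.le (by linarith)
    have b3 : (0:ℝ) ≤ ρ ^ (1 - s) := Real.rpow_nonneg hρ0.le _
    nlinarith [Real.rpow_nonneg h1ρ.le s]
  have eexp : (-((d:ℝ) * α / lam) * β) = -α * s := by rw [hsdef]; ring
  rw [e1, e2, eexp]
  calc ρ * (t ^ (-α * s) * ((ρ⁻¹ - 1) ^ s * c ^ (-s)) * Vr ^ β)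
      = (ρ * (ρ⁻¹ - 1) ^ s) * (c ^ (-s) * Vr ^ β * t ^ (-α * s)) := by ring
    _ ≤ 1 * (c ^ (-s) * Vr ^ β * t ^ (-α * s)) :=
        mul_le_mul_of_nonneg_right e3 (by positivity)
    _ = c ^ (-s) * Vr ^ β * t ^ (-α * s) := one_mul _
end

section
/- (Local existence for the nonlinear heat equation, commutative case θ = 0.) Let d ≥ 1, let p ≥ 2 be an integer, let u_0 ∈ L²(ℝ^d), let T > 0, let h : (0,T] → ℝ be measurable, positive and bounded, and let A : L²(ℝ^d) → L^{2p}(ℝ^d) be a bounded linear operator. Then there exist T* ∈ (0,T] and a continuous function u : [0,T*] → L²(ℝ^d) such that for all t ∈ [0,T*], u(t) = u_0 + ∫_0^t h(s)·|A u(s)|^p ds, the integral being a Bochner integral in L²(ℝ^d). -/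
/-!
For integer `p ≥ 2`, Hölder's inequality with exponents `2p/(p-1)` and `2p` applied to the pointwise
bound `||a|^p - |b|^p| ≤ p (|a| + |b|)^(p-1) |a - b|` gives
`‖|w|^p - |v|^p‖₂ ≤ p (‖w‖_{2p} + ‖v‖_{2p})^(p-1) ‖w - v‖_{2p}`, so `v ↦ |A v|^p` is Lipschitz on
bounded subsets of `L²`. Since the weight `h` is bounded, for small `T*` the Picard map
`u ↦ u₀ + ∫₀^t h(s) |A u(s)|^p ds` is a contraction of the complete space of Lipschitz curves
`[0, T*] → closedBall u₀ 1` starting at `u₀`, and its fixed point is the solution.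
-/

open MeasureTheory ENNReal Set Metric ODE Filter Topology
open scoped NNReal

theorem abs_abs_pow_sub_abs_pow_le (n : ℕ) (a b : ℝ) :
    |(|a| ^ n - |b| ^ n)| ≤ n * (|a| + |b|) ^ (n - 1) * |a - b| :=
  calc |(|a| ^ n - |b| ^ n)| ≤ |(|a| - |b|)| * n * max |(|a|)| |(|b|)| ^ (n - 1) :=
        abs_pow_sub_pow_le _ _ _
    _ ≤ |a - b| * n * (|a| + |b|) ^ (n - 1) := by
        rw [abs_abs, abs_abs]
        gcongr ?_ * _ * ?_ ^ _
        · exact abs_abs_sub_abs_le_abs_sub a b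
        · exact max_le_add_of_nonneg (abs_nonneg a) (abs_nonneg b)
    _ = n * (|a| + |b|) ^ (n - 1) * |a - b| := by ring

theorem ENNReal.holderTriple_mul_natCast_div_pred {n : ℕ} (hn : 2 ≤ n) (q : ℝ≥0∞) :
    HolderTriple (q * n / (n - 1 : ℕ)) (q * n) q where
  inv_add_inv_eq_inv := by
    have hn1 : ((n - 1 : ℕ) : ℝ≥0∞) + 1 = n := by norm_cast; omega
    rw [ENNReal.inv_div (.inl (natCast_ne_top (n - 1))) (.inl (by norm_cast; omega)), ← one_div,
      ENNReal.div_add_div_same, hn1, ← one_mul (n : ℝ≥0∞), ← mul_assoc, mul_one,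
      ENNReal.mul_div_mul_right _ _ (by simp; omega) (natCast_ne_top _), one_div]

namespace MeasureTheory

variable {α : Type*} [MeasurableSpace α] {μ : Measure α}

theorem eLpNorm_abs_pow {n : ℕ} (hn : n ≠ 0) (f : α → ℝ) (q : ℝ≥0∞) :
    eLpNorm (fun x => |f x| ^ n) q μ = eLpNorm f (q * n) μ ^ n := by
  simpa [Real.norm_eq_abs] using eLpNorm_norm_rpow (μ := μ) (p := q) f (q := n) (by positivity)

theorem eLpNorm_abs_add_abs_le {f g : α → ℝ} (hf : AEStronglyMeasurable f μ)
    (hg : AEStronglyMeasurable g μ) {q : ℝ≥0∞} (hq : 1 ≤ q) :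
    eLpNorm (fun x => |f x| + |g x|) q μ ≤ eLpNorm f q μ + eLpNorm g q μ := by
  have h := eLpNorm_add_le hf.norm hg.norm hq
  simp only [eLpNorm_norm] at h
  exact h

theorem eLpNorm_abs_pow_sub_abs_pow_le {n : ℕ} (hn : 2 ≤ n) {f g : α → ℝ}
    (hf : AEStronglyMeasurable f μ) (hg : AEStronglyMeasurable g μ) {q : ℝ≥0∞} (hq : 1 ≤ q) :
    eLpNorm (fun x => |f x| ^ n - |g x| ^ n) q μ ≤
      n * (eLpNorm f (q * n) μ + eLpNorm g (q * n) μ) ^ (n - 1) * eLpNorm (f - g) (q * n) μ := by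
  have := ENNReal.holderTriple_mul_natCast_div_pred hn q
  set φ : α → ℝ := fun x => (|f x| + |g x|) ^ (n - 1) with hφ_def
  have hφ : AEStronglyMeasurable φ μ := by fun_prop
  calc eLpNorm (fun x => |f x| ^ n - |g x| ^ n) q μ
      ≤ eLpNorm ((n : ℝ) • (φ • (f - g))) q μ := by
        refine eLpNorm_mono fun x => ?_
        have hφx : 0 ≤ φ x := by positivity
        simp only [Real.norm_eq_abs, Pi.smul_apply, smul_eq_mul, Pi.mul_apply, Pi.sub_apply,
          abs_mul, Nat.abs_cast, abs_of_nonneg hφx, ← mul_assoc]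
        exact abs_abs_pow_sub_abs_pow_le n (f x) (g x)
    _ = n * eLpNorm (φ • (f - g)) q μ := by
        rw [eLpNorm_const_smul]; simp
    _ ≤ n * (eLpNorm φ (q * n / (n - 1 : ℕ)) μ * eLpNorm (f - g) (q * n) μ) := by
        gcongr
        exact eLpNorm_smul_le_mul_eLpNorm (hf.sub hg) hφ
    _ ≤ n * (eLpNorm f (q * n) μ + eLpNorm g (q * n) μ) ^ (n - 1) * eLpNorm (f - g) (q * n) μ := by
        have : φ = fun x => |(|f x| + |g x|)| ^ (n - 1) := by
          simp only [hφ_def, abs_of_nonneg (add_nonneg (abs_nonneg (f _)) (abs_nonneg (g _)))]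
        rw [this, eLpNorm_abs_pow (by omega), ENNReal.div_mul_cancel (by norm_cast; omega)
          (natCast_ne_top _), ← mul_assoc]
        gcongr
        exact eLpNorm_abs_add_abs_le hf hg
          (one_le_mul_of_one_le_of_one_le hq (by exact_mod_cast (by omega : 1 ≤ n)))

theorem Lp.norm_sub_le_of_ae_eq_abs_pow {n : ℕ} (hn : 2 ≤ n) {q : ℝ≥0∞} (hq : 1 ≤ q)
    {F G : Lp ℝ q μ} {w v : Lp ℝ (q * n) μ} (hF : F =ᵐ[μ] fun x => |w x| ^ n)
    (hG : G =ᵐ[μ] fun x => |v x| ^ n) :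
    ‖F - G‖ ≤ n * (‖w‖ + ‖v‖) ^ (n - 1) * ‖w - v‖ := by
  have hFG : ⇑(F - G) =ᵐ[μ] fun x => |w x| ^ n - |v x| ^ n := (Lp.coeFn_sub F G).trans (hF.sub hG)
  have key := eLpNorm_abs_pow_sub_abs_pow_le hn (Lp.aestronglyMeasurable w)
    (Lp.aestronglyMeasurable v) hq
  rw [← eLpNorm_congr_ae hFG, ← eLpNorm_congr_ae (Lp.coeFn_sub w v)] at key
  rw [Lp.norm_def, Lp.norm_def w, Lp.norm_def v, Lp.norm_def (w - v)]
  refine (ENNReal.toReal_mono ?_ key).trans_eq ?_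
  · have := Lp.eLpNorm_ne_top w; have := Lp.eLpNorm_ne_top v; have := Lp.eLpNorm_ne_top (w - v)
    finiteness
  · simp [ENNReal.toReal_add (Lp.eLpNorm_ne_top w) (Lp.eLpNorm_ne_top v)]

theorem Lp.lipschitzOnWith_closedBall_of_ae_eq_abs_pow {n : ℕ} (hn : 2 ≤ n) {q : ℝ≥0∞}
    [Fact (1 ≤ q)] [Fact (1 ≤ q * n)] {N : Lp ℝ (q * n) μ → Lp ℝ q μ}
    (hN : ∀ w, N w =ᵐ[μ] fun x => |w x| ^ n) (R : ℝ≥0) :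
    LipschitzOnWith (n * (2 * R) ^ (n - 1)) N (closedBall 0 R) := by
  refine LipschitzOnWith.of_dist_le_mul fun w hw v hv => ?_
  rw [mem_closedBall_zero_iff] at hw hv
  rw [_root_.dist_eq_norm, _root_.dist_eq_norm]
  refine (Lp.norm_sub_le_of_ae_eq_abs_pow hn Fact.out (hN w) (hN v)).trans ?_
  push_cast
  gcongr
  linarith

end MeasureTheory

theorem norm_intervalIntegral_le_of_ae_restrict_Icc {E : Type*} [NormedAddCommGroup E]
    [NormedSpace ℝ E] {tmin tmax B : ℝ} {g : ℝ → E}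
    (hg : ∀ᵐ s ∂(volume.restrict (Icc tmin tmax)), ‖g s‖ ≤ B) {t₁ t₂ : ℝ}
    (ht₁ : t₁ ∈ Icc tmin tmax) (ht₂ : t₂ ∈ Icc tmin tmax) :
    ‖∫ s in t₁..t₂, g s‖ ≤ B * |t₂ - t₁| := by
  rw [ae_restrict_iff' measurableSet_Icc] at hg
  refine intervalIntegral.norm_integral_le_of_norm_le_const_ae ?_
  filter_upwards [hg] with s hs hsI
  exact hs (uIcc_subset_Icc ht₁ ht₂ (uIoc_subset_uIcc hsI))

lemma max_sub_sub_nonneg {tmin tmax : ℝ} (t₀ : Icc tmin tmax) :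
    0 ≤ max (tmax - t₀) (t₀ - tmin) :=
  le_max_of_le_left (sub_nonneg.2 t₀.2.2)

/-- Mathlib's `IsPicardLindelof` requires the vector field to be continuous in time; here the time
dependence of `(s, x) ↦ h s • F x` is through a weight `h` that is only measurable and essentially
bounded. -/
structure IsWeightedPicardLindelof {E : Type*} [NormedAddCommGroup E] (h : ℝ → ℝ) (F : E → E)
    {tmin tmax : ℝ} (t₀ : Icc tmin tmax) (x₀ : E) (a M C K : ℝ≥0) : Prop where
  aestronglyMeasurable : AEStronglyMeasurable h (volume.restrict (Icc tmin tmax))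
  ae_norm_le : ∀ᵐ s ∂(volume.restrict (Icc tmin tmax)), ‖h s‖ ≤ M
  lipschitzOnWith : LipschitzOnWith K F (closedBall x₀ a)
  norm_le : ∀ x ∈ closedBall x₀ a, ‖F x‖ ≤ C
  mul_max_le : M * C * max (tmax - t₀) (t₀ - tmin) ≤ a
  mul_max_lt_one : M * K * max (tmax - t₀) (t₀ - tmin) < 1

namespace IsWeightedPicardLindelof

variable {E : Type*} [NormedAddCommGroup E] {h : ℝ → ℝ} {F : E → E}
  {tmin tmax : ℝ} {t₀ : Icc tmin tmax} {x₀ : E} {a M C K : ℝ≥0}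

lemma compProj_mem_closedBall (hf : IsWeightedPicardLindelof h F t₀ x₀ a M C K)
    (α : FunSpace t₀ x₀ 0 (M * C)) (t : ℝ) : α.compProj t ∈ closedBall x₀ a :=
  α.compProj_mem_closedBall (by simpa using hf.mul_max_le)

variable [NormedSpace ℝ E]

lemma ae_norm_smul_comp_le (hf : IsWeightedPicardLindelof h F t₀ x₀ a M C K)
    (α : FunSpace t₀ x₀ 0 (M * C)) :
    ∀ᵐ s ∂(volume.restrict (Icc tmin tmax)), ‖h s • F (α.compProj s)‖ ≤ M * C := by
  filter_upwards [hf.ae_norm_le] with s hs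
  rw [norm_smul]
  exact mul_le_mul hs (hf.norm_le _ (hf.compProj_mem_closedBall α s)) (norm_nonneg _) M.2

lemma ae_norm_smul_comp_sub_le (hf : IsWeightedPicardLindelof h F t₀ x₀ a M C K)
    (α β : FunSpace t₀ x₀ 0 (M * C)) :
    ∀ᵐ s ∂(volume.restrict (Icc tmin tmax)),
      ‖h s • F (α.compProj s) - h s • F (β.compProj s)‖ ≤ M * K * dist α β := by
  filter_upwards [hf.ae_norm_le] with s hs
  rw [← smul_sub, norm_smul, mul_assoc]
  refine mul_le_mul hs ?_ (norm_nonneg _) M.2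
  rw [← dist_eq_norm]
  refine (hf.lipschitzOnWith.dist_le_mul _ (hf.compProj_mem_closedBall α s) _
    (hf.compProj_mem_closedBall β s)).trans ?_
  gcongr
  exact ContinuousMap.dist_apply_le_dist (f := α.toContinuousMap) (g := β.toContinuousMap) _

lemma integrableOn_smul_comp (hf : IsWeightedPicardLindelof h F t₀ x₀ a M C K)
    (α : FunSpace t₀ x₀ 0 (M * C)) :
    IntegrableOn (fun s => h s • F (α.compProj s)) (Icc tmin tmax) := by
  refine .of_bound measure_Icc_lt_top ?_ (M * C) (hf.ae_norm_smul_comp_le α)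
  exact hf.aestronglyMeasurable.smul (hf.lipschitzOnWith.continuousOn.comp_continuous
    α.continuous_compProj (hf.compProj_mem_closedBall α)).aestronglyMeasurable

lemma intervalIntegrable_smul_comp (hf : IsWeightedPicardLindelof h F t₀ x₀ a M C K)
    (α : FunSpace t₀ x₀ 0 (M * C)) {t₁ t₂ : ℝ}
    (ht₁ : t₁ ∈ Icc tmin tmax) (ht₂ : t₂ ∈ Icc tmin tmax) :
    IntervalIntegrable (fun s => h s • F (α.compProj s)) volume t₁ t₂ :=
  ((hf.integrableOn_smul_comp α).mono_set (uIcc_subset_Icc ht₁ ht₂)).intervalIntegrable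

noncomputable def next (hf : IsWeightedPicardLindelof h F t₀ x₀ a M C K)
    (α : FunSpace t₀ x₀ 0 (M * C)) : FunSpace t₀ x₀ 0 (M * C) where
  toFun t := picard (fun s x => h s • F x) t₀ x₀ α.compProj t
  lipschitzWith := LipschitzWith.of_dist_le_mul fun t₁ t₂ => by
    rw [dist_eq_norm, picard_apply, picard_apply, add_sub_add_left_eq_sub,
      intervalIntegral.integral_interval_sub_left (hf.intervalIntegrable_smul_comp α t₀.2 t₁.2)
        (hf.intervalIntegrable_smul_comp α t₀.2 t₂.2), Subtype.dist_eq, Real.dist_eq]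
    exact_mod_cast norm_intervalIntegral_le_of_ae_restrict_Icc (hf.ae_norm_smul_comp_le α) t₂.2 t₁.2
  mem_closedBall₀ := by simp

lemma next_apply (hf : IsWeightedPicardLindelof h F t₀ x₀ a M C K)
    (α : FunSpace t₀ x₀ 0 (M * C)) (t : Icc tmin tmax) :
    hf.next α t = x₀ + ∫ s in t₀..t, h s • F (α.compProj s) := rfl

lemma dist_next_next_le (hf : IsWeightedPicardLindelof h F t₀ x₀ a M C K)
    (α β : FunSpace t₀ x₀ 0 (M * C)) :
    dist (hf.next α) (hf.next β) ≤ M * K * max (tmax - t₀) (t₀ - tmin) * dist α β := by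
  have := max_sub_sub_nonneg t₀
  rw [← MetricSpace.isometry_induced FunSpace.toContinuousMap FunSpace.toContinuousMap.injective
    |>.dist_eq, ContinuousMap.dist_le (by positivity)]
  intro t
  rw [FunSpace.toContinuousMap_apply_eq_apply, FunSpace.toContinuousMap_apply_eq_apply,
    dist_eq_norm, next_apply, next_apply, add_sub_add_left_eq_sub,
    ← intervalIntegral.integral_sub (hf.intervalIntegrable_smul_comp α t₀.2 t.2)
      (hf.intervalIntegrable_smul_comp β t₀.2 t.2)]
  calc _ ≤ M * K * dist α β * |(t : ℝ) - t₀| :=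
        norm_intervalIntegral_le_of_ae_restrict_Icc (hf.ae_norm_smul_comp_sub_le α β) t₀.2 t.2
    _ ≤ M * K * dist α β * max (tmax - t₀) (t₀ - tmin) := by
        gcongr; exact abs_sub_le_max_sub t.2.1 t.2.2 _
    _ = _ := by ring

lemma contractingWith_next (hf : IsWeightedPicardLindelof h F t₀ x₀ a M C K) :
    ContractingWith ⟨M * K * max (tmax - t₀) (t₀ - tmin),
      by have := max_sub_sub_nonneg t₀; positivity⟩ hf.next :=
  ⟨hf.mul_max_lt_one, .of_dist_le_mul hf.dist_next_next_le⟩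

theorem exists_eq_add_integral [CompleteSpace E] (hf : IsWeightedPicardLindelof h F t₀ x₀ a M C K) :
    ∃ u : ℝ → E, ContinuousOn u (Icc tmin tmax) ∧
      ∀ t ∈ Icc tmin tmax, u t = x₀ + ∫ s in t₀..t, h s • F (u s) := by
  set α := ContractingWith.fixedPoint _ hf.contractingWith_next
  have hα : hf.next α = α := ContractingWith.fixedPoint_isFixedPt _
  refine ⟨α.compProj, α.continuous_compProj.continuousOn, fun t ht => ?_⟩
  calc α.compProj t = α ⟨t, ht⟩ := FunSpace.compProj_of_mem ht
    _ = hf.next α ⟨t, ht⟩ := by rw [hα]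
    _ = _ := hf.next_apply α _

end IsWeightedPicardLindelof

theorem LipschitzOnWith.norm_le_add_mul_of_mem_closedBall {E F : Type*} [SeminormedAddCommGroup E]
    [SeminormedAddCommGroup F] {f : E → F} {K : ℝ≥0} {x₀ x : E} {a : ℝ}
    (hf : LipschitzOnWith K f (closedBall x₀ a)) (hx : x ∈ closedBall x₀ a) :
    ‖f x‖ ≤ ‖f x₀‖ + K * a := by
  have hx₀ : x₀ ∈ closedBall x₀ a := mem_closedBall_self (dist_nonneg.trans hx)
  calc ‖f x‖ ≤ ‖f x₀‖ + ‖f x - f x₀‖ := norm_le_norm_add_norm_sub' _ _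
    _ ≤ ‖f x₀‖ + K * a := by
        gcongr
        exact hf.norm_sub_le_of_le hx hx₀ (by rwa [← dist_eq_norm])

theorem exists_eq_add_integral_smul_of_lipschitzOnWith {E : Type*} [NormedAddCommGroup E]
    [NormedSpace ℝ E] [CompleteSpace E] {F : E → E} {x₀ : E} {a K : ℝ≥0} (ha : 0 < a)
    (hF : LipschitzOnWith K F (closedBall x₀ a)) {h : ℝ → ℝ} {T : ℝ} (hT : 0 < T)
    (hh : AEStronglyMeasurable h (volume.restrict (Icc 0 T))) {M : ℝ≥0}
    (hM : ∀ᵐ s ∂(volume.restrict (Icc 0 T)), ‖h s‖ ≤ M) :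
    ∃ τ ∈ Ioc 0 T, ∃ u : ℝ → E, ContinuousOn u (Icc 0 τ) ∧
      ∀ t ∈ Icc 0 τ, u t = x₀ + ∫ s in (0 : ℝ)..t, h s • F (u s) := by
  set C : ℝ≥0 := ‖F x₀‖₊ + K * a
  have hsmall (c : ℝ) {b : ℝ} (hb : 0 < b) : ∀ᶠ τ in 𝓝 (0 : ℝ), c * τ < b := by
    have : Tendsto (fun τ : ℝ => c * τ) (𝓝 0) (𝓝 0) := by
      simpa using (continuous_const_mul c).tendsto 0
    exact this.eventually (gt_mem_nhds hb)
  obtain ⟨τ, ⟨hτT, hτa, hτ1⟩, hτ0⟩ := ((eventually_nhdsWithin_of_eventually_nhds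
    ((gt_mem_nhds hT).and ((hsmall (M * C) (NNReal.coe_pos.2 ha)).and
      (hsmall (M * K) one_pos)))).and (self_mem_nhdsWithin (s := Ioi 0))).exists
  have hτ : Icc (0 : ℝ) τ ⊆ Icc 0 T := Icc_subset_Icc_right hτT.le
  have hf : IsWeightedPicardLindelof h F (⟨0, le_rfl, hτ0.le⟩ : Icc (0 : ℝ) τ) x₀ a M C K :=
    { aestronglyMeasurable := hh.mono_measure (Measure.restrict_mono hτ le_rfl)
      ae_norm_le := ae_restrict_of_ae_restrict_of_subset hτ hM
      lipschitzOnWith := hF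
      norm_le := fun x hx => hF.norm_le_add_mul_of_mem_closedBall hx
      mul_max_le := by simpa [hτ0.le] using hτa.le
      mul_max_lt_one := by simpa [hτ0.le] using hτ1 }
  exact ⟨τ, ⟨hτ0, hτT.le⟩, hf.exists_eq_add_integral⟩

theorem stmt13_general (d : ℕ) (p : ℕ) (hp : 2 ≤ p)
    [Fact ((1 : ℝ≥0∞) ≤ 2 * p)]
    (u₀ : Lp ℝ 2 (volume : Measure (EuclideanSpace ℝ (Fin d))))
    (T : ℝ) (hT : 0 < T)
    (h : ℝ → ℝ) (hmeas : Measurable h)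
    (hpos : ∀ s ∈ Set.Ioc (0 : ℝ) T, 0 < h s)
    (hbdd : ∃ M : ℝ, ∀ s ∈ Set.Ioc (0 : ℝ) T, h s ≤ M)
    (A : Lp ℝ 2 (volume : Measure (EuclideanSpace ℝ (Fin d))) →L[ℝ]
         Lp ℝ (2 * p) (volume : Measure (EuclideanSpace ℝ (Fin d))))
    -- `N w` realizes `|w|^p` as an element of `L²(ℝ^d)`
    (N : Lp ℝ (2 * p) (volume : Measure (EuclideanSpace ℝ (Fin d))) →
         Lp ℝ 2 (volume : Measure (EuclideanSpace ℝ (Fin d))))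
    (hN : ∀ w, (N w : EuclideanSpace ℝ (Fin d) → ℝ) =ᵐ[volume] fun x => |w x| ^ p) :
    ∃ Tstar ∈ Set.Ioc (0 : ℝ) T,
      ∃ u : ℝ → Lp ℝ 2 (volume : Measure (EuclideanSpace ℝ (Fin d))),
        ContinuousOn u (Set.Icc 0 Tstar) ∧
        ∀ t ∈ Set.Icc (0 : ℝ) Tstar,
          u t = u₀ + ∫ s in (0 : ℝ)..t, h s • N (A (u s)) := by
  obtain ⟨M, hM⟩ := hbdd
  have hh : ∀ᵐ s ∂(volume.restrict (Icc 0 T)), ‖h s‖ ≤ M.toNNReal := by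
    rw [← Measure.restrict_congr_set Ioc_ae_eq_Icc, ae_restrict_iff' measurableSet_Ioc]
    refine .of_forall fun s hs => ?_
    rw [Real.norm_of_nonneg (hpos s hs).le]
    exact (hM s hs).trans (Real.le_coe_toNNReal M)
  have hA : MapsTo A (closedBall u₀ 1) (closedBall 0 (‖A‖₊ * (‖u₀‖₊ + 1) : ℝ≥0)) := fun v hv => by
    rw [mem_closedBall_zero_iff]
    refine (A.le_opNorm v).trans ?_
    push_cast
    gcongr
    exact norm_le_norm_add_const_of_dist_le hv
  have hNA := (Lp.lipschitzOnWith_closedBall_of_ae_eq_abs_pow hp hN _).comp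
    A.lipschitz.lipschitzOnWith hA
  exact exists_eq_add_integral_smul_of_lipschitzOnWith one_pos hNA hT
    hmeas.aestronglyMeasurable hh

theorem stmt13 (d : ℕ) (hd : 1 ≤ d) (p : ℕ) (hp : 2 ≤ p)
    [Fact ((1 : ℝ≥0∞) ≤ 2 * p)]
    (u₀ : Lp ℝ 2 (volume : Measure (EuclideanSpace ℝ (Fin d))))
    (T : ℝ) (hT : 0 < T)
    (h : ℝ → ℝ) (hmeas : Measurable h)
    (hpos : ∀ s ∈ Set.Ioc (0 : ℝ) T, 0 < h s)
    (hbdd : ∃ M : ℝ, ∀ s ∈ Set.Ioc (0 : ℝ) T, h s ≤ M)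
    (A : Lp ℝ 2 (volume : Measure (EuclideanSpace ℝ (Fin d))) →L[ℝ]
         Lp ℝ (2 * p) (volume : Measure (EuclideanSpace ℝ (Fin d))))
    -- `N w` realizes `|w|^p` as an element of `L²(ℝ^d)`
    (N : Lp ℝ (2 * p) (volume : Measure (EuclideanSpace ℝ (Fin d))) →
         Lp ℝ 2 (volume : Measure (EuclideanSpace ℝ (Fin d))))
    (hN : ∀ w, (N w : EuclideanSpace ℝ (Fin d) → ℝ) =ᵐ[volume] fun x => |w x| ^ p) :
    ∃ Tstar ∈ Set.Ioc (0 : ℝ) T,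
      ∃ u : ℝ → Lp ℝ 2 (volume : Measure (EuclideanSpace ℝ (Fin d))),
        ContinuousOn u (Set.Icc 0 Tstar) ∧
        ∀ t ∈ Set.Icc (0 : ℝ) Tstar,
          u t = u₀ + ∫ s in (0 : ℝ)..t, h s • N (A (u s)) :=
  stmt13_general d p hp u₀ T hT h hmeas hpos hbdd A N hN
end
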